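/- Let u_1u_2 be in normal form, x ∈ Π with λ(u_2), x distinct nonincident and λ(u_2) + x = λ(s) ≠ V, and let x', v_2 with (s, λ(u_2), x'), (s, x, λ(v_2)) ∈ T'. Then λ(u_1) ≠ x' and λ(u_1) ⊊ x' does not hold. -/

import Mathlib

/-- An abstract finite projective geometry of dimension `n` with an involution `lam`
satisfying `lam (Π_i) = Π_{n+1-i}`, together with an Ã_n-triangle presentation `T`
compatible with `lam`, satisfying axioms (A)–(F) of Cartwright–Shapiro.
Here `T' = {(u,v,w) ∈ T : dim u + dim v + dim w = n+1}`. -/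
structure TrianglePresentation (n : ℕ) (P : Type*) where
  dim : P → ℕ
  incid : P → P → Prop
  lam : P → P
  T : P → P → P → Prop
  incid_symm : ∀ x y, incid x y → incid y x
  lam_invol : Function.Involutive lam
  dim_mem : ∀ x, 1 ≤ dim x ∧ dim x ≤ n
  lam_dim : ∀ x, dim (lam x) = n + 1 - dim x
  /-- Axiom (A): `(u,v,w) ∈ T` for some `w` iff `λ(u)` and `v` are distinct and incident. -/
  axiomA : ∀ u v, (∃ w, T u v w) ↔ (lam u ≠ v ∧ incid (lam u) v)
  /-- Axiom (B): cyclic invariance. -/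
  axiomB : ∀ u v w, T u v w → T v w u
  /-- Axiom (C): uniqueness of the third vertex. -/
  axiomC : ∀ u v w₁ w₂, T u v w₁ → T u v w₂ → w₁ = w₂
  /-- Axiom (D). -/
  axiomD : ∀ u v w, T u v w → T (lam w) (lam v) (lam u)
  /-- Axiom (E). -/
  axiomE : ∀ u v w, T u v w →
    dim u + dim v + dim w = n + 1 ∨ dim u + dim v + dim w = 2 * (n + 1)
  /-- Axiom (F), stated for the half `T'` of `T`. -/
  axiomF : ∀ x y u x' y',
    (T x y u ∧ dim x + dim y + dim u = n + 1) →
    (T x' y' (lam u) ∧ dim x' + dim y' + dim (lam u) = n + 1) →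
    ∃ w, (T y' x w ∧ dim y' + dim x + dim w = n + 1) ∧
         (T y x' (lam w) ∧ dim y + dim x' + dim (lam w) = n + 1)
  /-- For `u, v ∈ Π`, `(u,v,w) ∈ T'` for some `w` iff `λ(u) ⊋ v`. -/
  exists_T' : ∀ u v,
    (∃ w, T u v w ∧ dim u + dim v + dim w = n + 1) ↔
      (lam u ≠ v ∧ incid (lam u) v ∧ dim v < dim (lam u))

namespace TrianglePresentation

variable {n : ℕ} {P : Type*} (TP : TrianglePresentation n P)

/-- The half `T'` of `T` consisting of triples with dimension sum `n+1`. -/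
def T' (u v w : P) : Prop :=
  TP.T u v w ∧ TP.dim u + TP.dim v + TP.dim w = n + 1

/-- `T'' = T \ T'`. -/
def T'' (u v w : P) : Prop :=
  TP.T u v w ∧ ¬ (TP.dim u + TP.dim v + TP.dim w = n + 1)

/-- `x ⊂ y`: `x` is incident with `y` and `dim x ≤ dim y` (or `x = y`). -/
def Sub (x y : P) : Prop :=
  x = y ∨ (TP.incid x y ∧ TP.dim x ≤ TP.dim y)

/-- `x ⊊ y`: proper containment. -/
def PSub (x y : P) : Prop :=
  TP.Sub x y ∧ x ≠ y

/-- `x + y = V`: no element of `Π` contains both `x` and `y`. -/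
def SumV (x y : P) : Prop :=
  ¬ ∃ z, TP.Sub x z ∧ TP.Sub y z

/-- `x + y = c`: `c` is the join of `x` and `y` in the projective geometry. -/
def JoinEq (x y c : P) : Prop :=
  TP.Sub x c ∧ TP.Sub y c ∧ ∀ z, TP.Sub x z → TP.Sub y z → TP.Sub c z

end TrianglePresentation

/-! Normal form of `u₁u₂` rules out every triangle `(λ(u₂), λ(u₁), b) ∈ T'`, since such a triangle
would give `λ(u₁) ⊊ u₂`. If `λ(u₁) = x'`, that triangle is a rotation of `(s, λ(u₂), x')`. If
`λ(u₁) ⊊ x'`, then `(λ(x'), λ(u₁), w) ∈ T'` for some `w`, and axiom (F) applied to it and to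
`(s, λ(u₂), x')` produces that triangle. -/

namespace TrianglePresentation

variable {n : ℕ} {P : Type*} (TP : TrianglePresentation n P)

theorem T'_rotate {u v w : P} (h : TP.T' u v w) : TP.T' v w u :=
  ⟨TP.axiomB _ _ _ h.1, by have := h.2; omega⟩

theorem dim_lam_add_dim (x : P) : TP.dim (TP.lam x) + TP.dim x = n + 1 := by
  have := TP.lam_dim x
  have := TP.dim_mem x
  omega

/-- The triangle `(λ b, a, w)` given by axiom (A) lies in `T'` when `dim a < dim b`; otherwise
axiom (D) turns it into a triangle of `T'` forcing `dim b < dim a`. -/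
theorem dim_ne_of_incid {a b : P} (hinc : TP.incid a b) (hne : a ≠ b) : TP.dim a ≠ TP.dim b := by
  obtain ⟨w, hw⟩ : ∃ w, TP.T (TP.lam b) a w := by
    rw [TP.axiomA, TP.lam_invol]
    exact ⟨hne.symm, TP.incid_symm _ _ hinc⟩
  have hb := TP.dim_lam_add_dim b
  rcases TP.axiomE _ _ _ hw with hsum | hsum
  · have hlt := ((TP.exists_T' _ _).1 ⟨w, hw, hsum⟩).2.2
    rw [TP.lam_invol] at hlt
    omega
  · have hD := TP.axiomD _ _ _ hw
    rw [TP.lam_invol] at hD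
    have ha := TP.dim_lam_add_dim a
    have hw' := TP.dim_lam_add_dim w
    have hT' : TP.T' (TP.lam a) b (TP.lam w) := TP.T'_rotate ⟨hD, by omega⟩
    have hlt := ((TP.exists_T' _ _).1 ⟨_, hT'⟩).2.2
    rw [TP.lam_invol] at hlt
    omega

theorem dim_lt_of_psub {a b : P} (h : TP.PSub a b) : TP.dim a < TP.dim b := by
  obtain ⟨hab | ⟨hinc, hle⟩, hne⟩ := h
  · exact absurd hab hne
  · exact lt_of_le_of_ne hle (TP.dim_ne_of_incid hinc hne)

theorem exists_T'_lam_of_psub {v y : P} (h : TP.PSub v y) : ∃ w, TP.T' (TP.lam y) v w := by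
  have hlt := TP.dim_lt_of_psub h
  obtain ⟨hinc | ⟨hinc, -⟩, hne⟩ := h
  · exact absurd hinc hne
  · refine (TP.exists_T' _ _).2 ?_
    rw [TP.lam_invol]
    exact ⟨hne.symm, TP.incid_symm _ _ hinc, hlt⟩

theorem psub_lam_of_T' {u v w : P} (h : TP.T' u v w) : TP.PSub v (TP.lam u) := by
  obtain ⟨hne, hinc, hlt⟩ := (TP.exists_T' u v).1 ⟨w, h⟩
  exact ⟨Or.inr ⟨TP.incid_symm _ _ hinc, hlt.le⟩, hne.symm⟩

theorem not_sub_of_sumV {a b : P} (h : TP.SumV a b) : ¬ TP.Sub a b :=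
  fun hab => h ⟨b, hab, Or.inl rfl⟩

theorem not_T'_of_sumV {u₁ u₂ b : P} (hnf : TP.SumV (TP.lam u₁) u₂) :
    ¬ TP.T' (TP.lam u₂) (TP.lam u₁) b := fun h => by
  have hsub := (TP.psub_lam_of_T' h).1
  rw [TP.lam_invol] at hsub
  exact TP.not_sub_of_sumV hnf hsub

end TrianglePresentation

theorem lemma2_case5_exclusions_general {n : ℕ} {P : Type*} (TP : TrianglePresentation n P)
    (u₁ u₂ s x' : P)
    (hnf : TP.SumV (TP.lam u₁) u₂)
    (h1 : TP.T' s (TP.lam u₂) x') :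
    TP.lam u₁ ≠ x' ∧ ¬ TP.PSub (TP.lam u₁) x' := by
  constructor
  · rintro rfl
    exact TP.not_T'_of_sumV hnf (TP.T'_rotate h1)
  · intro hpsub
    obtain ⟨w, hw⟩ := TP.exists_T'_lam_of_psub hpsub
    have h1' : TP.T' s (TP.lam u₂) (TP.lam (TP.lam x')) := by rwa [TP.lam_invol]
    obtain ⟨w₀, hw₀, -⟩ := TP.axiomF _ _ _ _ _ (TP.T'_rotate hw) h1'
    exact TP.not_T'_of_sumV hnf hw₀

/-- Lemma 2, case (5), first assertions: if `u₁u₂` is in normal form, `λ(u₂)` and `x`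
are distinct and nonincident with join `λ(u₂) + x = λ(s)`, and
`(s, λ(u₂), x'), (s, x, λ(v₂)) ∈ T'`, then `λ(u₁) ≠ x'` and `λ(u₁) ⊊ x'` does not hold. -/
theorem lemma2_case5_exclusions {n : ℕ} {P : Type*} (TP : TrianglePresentation n P)
    (u₁ u₂ x s x' v₂ : P)
    (hnf : TP.SumV (TP.lam u₁) u₂)
    (hne : TP.lam u₂ ≠ x) (hni : ¬ TP.incid (TP.lam u₂) x)
    (hjoin : TP.JoinEq (TP.lam u₂) x (TP.lam s))
    (h1 : TP.T' s (TP.lam u₂) x') (h2 : TP.T' s x (TP.lam v₂)) :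
    TP.lam u₁ ≠ x' ∧ ¬ TP.PSub (TP.lam u₁) x' :=
  lemma2_case5_exclusions_general TP u₁ u₂ s x' hnf h1
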